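/- arXiv:2601.02853 — 7 statements merged into one kernel-verified Lean document; each statement's English description precedes it below -/
import Mathlib

section
/- For every real λ > 1, one has ∫₀^∞ u^{λ−1} e^{−u²/4} du < 2√π · (2(λ−1)/e)^{(λ−1)/2}. -/
open Real MeasureTheory

/-- The length of the self-shrinking half-line `𝒫` is strictly less than the
length of the self-shrinking cylinder `𝒞`:
`∫₀^∞ u^{λ-1} e^{-u²/4} du < 2√π (2(λ-1)/e)^{(λ-1)/2}` for all `λ > 1`. -/
theorem halfline_length_lt_cylinder_length (lam : ℝ) (hlam : 1 < lam) :
    (∫ u in Set.Ioi (0:ℝ), u ^ (lam - 1) * exp (-u ^ 2 / 4))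
      < 2 * Real.sqrt π * (2 * (lam - 1) / exp 1) ^ ((lam - 1) / 2) := by
  set a := lam - 1 with ha_def
  have ha : 0 < a := by simp [ha_def]; linarith
  have h2a : 0 < 2 * a := by linarith
  set u₀ := Real.sqrt (2 * a) with hu0_def
  have hu₀ : 0 < u₀ := Real.sqrt_pos.mpr h2a
  have hu₀sq : u₀ ^ 2 = 2 * a := Real.sq_sqrt h2a.le
  set M := (2 * a / exp 1) ^ (a / 2) with hM_def
  have hMe : M = Real.exp (a * Real.log u₀ - a / 2) := by
    rw [hM_def, Real.rpow_def_of_pos (by positivity)]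
    have hlog : Real.log (2 * a / exp 1) = 2 * Real.log u₀ - 1 := by
      rw [Real.log_div (by positivity) (exp_ne_zero 1), Real.log_exp]
      rw [← hu₀sq, Real.log_pow]
      push_cast; ring
    rw [hlog]; ring_nf
  have hMpos : 0 < M := by rw [hMe]; exact Real.exp_pos _
  set g : ℝ → ℝ := fun u => Real.exp (-(1/4 : ℝ) * (u - u₀) ^ 2) with hg_def
  have hgpos : ∀ u, 0 < g u := fun u => Real.exp_pos _
  have hgint : Integrable g :=
    (integrable_exp_neg_mul_sq (by norm_num : (0:ℝ) < 1/4)).comp_sub_right u₀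
  -- pointwise bound
  have hpt : ∀ u ∈ Set.Ioi (0:ℝ), u ^ a * exp (-u ^ 2 / 4) ≤ M * g u := by
    intro u hu
    have hu' : 0 < u := hu
    have hlogkey : u₀ * (Real.log u - Real.log u₀) ≤ u - u₀ := by
      have h1 : Real.log (u / u₀) ≤ u / u₀ - 1 :=
        Real.log_le_sub_one_of_pos (by positivity)
      rw [Real.log_div hu'.ne' hu₀.ne'] at h1
      have := mul_le_mul_of_nonneg_left h1 hu₀.le
      calc u₀ * (Real.log u - Real.log u₀) ≤ u₀ * (u / u₀ - 1) := this
        _ = u - u₀ := by field_simp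
    have hL : u ^ a * exp (-u ^ 2 / 4) = Real.exp (a * Real.log u - u ^ 2 / 4) := by
      rw [Real.rpow_def_of_pos hu', ← Real.exp_add]; ring_nf
    have hR : M * g u = Real.exp (a * Real.log u₀ - a / 2 - (1/4) * (u - u₀) ^ 2) := by
      rw [hMe, hg_def, ← Real.exp_add]; ring_nf
    rw [hL, hR]
    apply Real.exp_le_exp.mpr
    have ha2 : a = u₀ ^ 2 / 2 := by rw [hu₀sq]; ring
    rw [ha2]
    nlinarith [sq_nonneg (u - u₀), hu₀.le]
  have hint1 : IntegrableOn (fun u : ℝ => u ^ a * exp (-u ^ 2 / 4)) (Set.Ioi 0) := by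
    have := integrableOn_rpow_mul_exp_neg_mul_sq (b := 1/4) (by norm_num) (s := a)
      (by linarith)
    refine this.congr_fun (fun u _ => by ring_nf) measurableSet_Ioi
  have hstep1 : (∫ u in Set.Ioi (0:ℝ), u ^ a * exp (-u ^ 2 / 4))
      ≤ ∫ u in Set.Ioi (0:ℝ), M * g u :=
    setIntegral_mono_on hint1 ((hgint.const_mul M).integrableOn) measurableSet_Ioi hpt
  have hsplit : (∫ u in Set.Iic (0:ℝ), M * g u) + (∫ u in Set.Ioi (0:ℝ), M * g u)
      = ∫ u, M * g u :=
    intervalIntegral.integral_Iic_add_Ioi ((hgint.const_mul M).integrableOn) ((hgint.const_mul M).integrableOn)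
  have hpos : 0 < ∫ u in Set.Iic (0:ℝ), M * g u := by
    rw [setIntegral_pos_iff_support_of_nonneg_ae]
    · have : Function.support (fun u => M * g u) = Set.univ := by
        ext u; simp [Function.mem_support, (hgpos u).ne', hMpos.ne']
      rw [this]
      simp [Set.univ_inter]
    · exact Filter.Eventually.of_forall fun u => (mul_pos hMpos (hgpos u)).le
    · exact (hgint.const_mul M).integrableOn
  have hstep2 : (∫ u in Set.Ioi (0:ℝ), M * g u) < ∫ u, M * g u := by linarith
  have htot : (∫ u, M * g u) = 2 * Real.sqrt π * M := by
    rw [integral_const_mul]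
    have : (∫ u, g u) = ∫ u : ℝ, Real.exp (-(1/4 : ℝ) * u ^ 2) := by
      rw [hg_def]
      exact integral_sub_right_eq_self (fun u => Real.exp (-(1/4 : ℝ) * u ^ 2)) u₀
    rw [this, integral_gaussian]
    have : Real.sqrt (π / (1/4)) = 2 * Real.sqrt π := by
      rw [show π / (1/4 : ℝ) = 4 * π by ring, Real.sqrt_mul (by norm_num)]
      rw [show Real.sqrt 4 = 2 by rw [show (4:ℝ) = 2^2 by norm_num, Real.sqrt_sq]; norm_num]
    rw [this]; ring
  calc (∫ u in Set.Ioi (0:ℝ), u ^ a * exp (-u ^ 2 / 4))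
      ≤ ∫ u in Set.Ioi (0:ℝ), M * g u := hstep1
    _ < ∫ u, M * g u := hstep2
    _ = 2 * Real.sqrt π * M := htot
end

section
/- Let λ > 1, let M > 0, and define f_λ(a) = 2M a^{λ−1} e^{−a²/4} − 4M ∫₀^a r^{λ−1} e^{−r²/4} dr and g_λ(b) = 2M b^{λ−1} e^{−b²/4} + 4M ∫₀^b r^{λ−1} e^{−r²/4} dr for a, b ≥ 0. Then f_λ attains its maximum over [0, ∞) at a_λ = −2 + √(2(1+λ)), i.e. f_λ(a) ≤ f_λ(a_λ) for all a ≥ 0, and g_λ attains its maximum over [0, ∞) at b_λ = 2 + √(2(1+λ)), i.e. g_λ(b) ≤ g_λ(b_λ) for all b ≥ 0. -/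
/-!
Both `f_λ` and `g_λ` are `2M` times `x ↦ x^p e^{-x²/4} + κ ∫₀^x r^p e^{-r²/4} dr` with
`p = λ - 1` and `κ = ∓2`. On `(0, ∞)` its derivative is
`x^{p-1} e^{-x²/4} (2p + 2κx - x²) / 2`, whose sign is that of `c - x` for the positive root
`c = κ + √(κ² + 2p)` of the quadratic factor; so the function increases on `[0, c]` and
decreases on `[c, ∞)`.
-/

open Real MeasureTheory

namespace GaussianWeightedProfile

noncomputable def profile (p κ x : ℝ) : ℝ :=
  x ^ p * exp (-x ^ 2 / 4) + κ * ∫ r in (0 : ℝ)..x, r ^ p * exp (-r ^ 2 / 4)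

noncomputable def peak (p κ : ℝ) : ℝ :=
  κ + √(κ ^ 2 + 2 * p)

variable {p : ℝ} (κ : ℝ)

lemma continuous_rpow_mul_exp (hp : 0 ≤ p) :
    Continuous fun x : ℝ => x ^ p * exp (-x ^ 2 / 4) :=
  (continuous_rpow_const hp).mul (by fun_prop)

lemma continuous_profile (hp : 0 ≤ p) : Continuous (profile p κ) :=
  (continuous_rpow_mul_exp hp).add
    (continuous_const.mul (intervalIntegral.continuous_primitive
      (fun _ _ => (continuous_rpow_mul_exp hp).intervalIntegrable _ _) 0))

lemma hasDerivAt_profile {x : ℝ} (hp : 0 ≤ p) (hx : 0 < x) :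
    HasDerivAt (profile p κ)
      (x ^ (p - 1) * exp (-x ^ 2 / 4) / 2 * (2 * p + 2 * κ * x - x ^ 2)) x := by
  have hpow : HasDerivAt (fun y : ℝ => y ^ p) (p * x ^ (p - 1)) x :=
    hasDerivAt_rpow_const (Or.inl hx.ne')
  have hgauss : HasDerivAt (fun y : ℝ => exp (-y ^ 2 / 4)) (exp (-x ^ 2 / 4) * (-x / 2)) x := by
    have hexponent : HasDerivAt (fun y : ℝ => -y ^ 2 / 4) (-x / 2) x := by
      refine (((hasDerivAt_pow 2 x).neg).div_const 4).congr_deriv ?_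
      push_cast
      ring
    exact hexponent.exp
  have hprimitive := ((continuous_rpow_mul_exp hp).integral_hasStrictDerivAt 0 x).hasDerivAt
  have hsplit : x ^ p = x ^ (p - 1) * x := by
    rw [← rpow_add_one hx.ne']
    norm_num
  refine ((hpow.mul hgauss).add (hprimitive.const_mul κ)).congr_deriv ?_
  rw [hsplit]
  ring

lemma quadratic_eq_peak_sub_mul (hp : 0 ≤ p) (x : ℝ) :
    2 * p + 2 * κ * x - x ^ 2 = (peak p κ - x) * (x - κ + √(κ ^ 2 + 2 * p)) := by
  have hsq : √(κ ^ 2 + 2 * p) ^ 2 = κ ^ 2 + 2 * p := sq_sqrt (by nlinarith)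
  unfold peak
  linear_combination -hsq

lemma abs_lt_sqrt_sq_add (hp : 0 < p) : |κ| < √(κ ^ 2 + 2 * p) := by
  rw [← sqrt_sq_eq_abs]
  exact sqrt_lt_sqrt (sq_nonneg κ) (by linarith)

lemma peak_pos (hp : 0 < p) : 0 < peak p κ := by
  have := abs_lt_sqrt_sq_add κ hp
  unfold peak
  linarith [neg_abs_le κ]

lemma sub_add_sqrt_pos (hp : 0 < p) {x : ℝ} (hx : 0 < x) :
    0 < x - κ + √(κ ^ 2 + 2 * p) := by
  linarith [abs_lt_sqrt_sq_add κ hp, le_abs_self κ]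

lemma hasDerivAt_profile_eq_mul_peak_sub (hp : 0 < p) {x : ℝ} (hx : 0 < x) :
    ∃ w, 0 ≤ w ∧ HasDerivAt (profile p κ) (w * (peak p κ - x)) x := by
  refine ⟨x ^ (p - 1) * exp (-x ^ 2 / 4) / 2 * (x - κ + √(κ ^ 2 + 2 * p)), ?_, ?_⟩
  · have := sub_add_sqrt_pos κ hp hx
    positivity
  · convert hasDerivAt_profile κ hp.le hx using 1
    rw [quadratic_eq_peak_sub_mul κ hp.le]
    ring

lemma monotoneOn_profile (hp : 0 < p) : MonotoneOn (profile p κ) (Set.Icc 0 (peak p κ)) := by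
  refine monotoneOn_of_deriv_nonneg (convex_Icc _ _) (continuous_profile κ hp.le).continuousOn
    ?_ ?_
  all_goals
    intro x hx
    rw [interior_Icc] at hx
    obtain ⟨w, hw, hderiv⟩ := hasDerivAt_profile_eq_mul_peak_sub κ hp hx.1
  · exact hderiv.differentiableAt.differentiableWithinAt
  · rw [hderiv.deriv]
    exact mul_nonneg hw (sub_nonneg.2 hx.2.le)

lemma antitoneOn_profile (hp : 0 < p) : AntitoneOn (profile p κ) (Set.Ici (peak p κ)) := by
  refine antitoneOn_of_deriv_nonpos (convex_Ici _) (continuous_profile κ hp.le).continuousOn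
    ?_ ?_
  all_goals
    intro x hx
    rw [interior_Ici] at hx
    obtain ⟨w, hw, hderiv⟩ :=
      hasDerivAt_profile_eq_mul_peak_sub κ hp ((peak_pos κ hp).trans hx)
  · exact hderiv.differentiableAt.differentiableWithinAt
  · rw [hderiv.deriv]
    exact mul_nonpos_of_nonneg_of_nonpos hw (sub_nonpos.2 (Set.mem_Ioi.1 hx).le)

theorem profile_le_profile_peak (hp : 0 < p) {x : ℝ} (hx : 0 ≤ x) :
    profile p κ x ≤ profile p κ (peak p κ) := by
  rcases le_total x (peak p κ) with hle | hle
  · exact monotoneOn_profile κ hp ⟨hx, hle⟩ ⟨(peak_pos κ hp).le, le_rfl⟩ hle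
  · exact antitoneOn_profile κ hp Set.self_mem_Ici hle hle

end GaussianWeightedProfile

open GaussianWeightedProfile

/-- The functions `f_λ` and `g_λ` attain their maxima over `[0,∞)` at
`a_λ = -2 + √(2(1+λ))` and `b_λ = 2 + √(2(1+λ))` respectively. -/
theorem f_g_attain_max (lam M : ℝ) (hlam : 1 < lam) (hM : 0 < M)
    (f g : ℝ → ℝ)
    (hf : ∀ a : ℝ, f a = 2 * M * a ^ (lam - 1) * exp (-a ^ 2 / 4)
        - 4 * M * ∫ r in (0:ℝ)..a, r ^ (lam - 1) * exp (-r ^ 2 / 4))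
    (hg : ∀ b : ℝ, g b = 2 * M * b ^ (lam - 1) * exp (-b ^ 2 / 4)
        + 4 * M * ∫ r in (0:ℝ)..b, r ^ (lam - 1) * exp (-r ^ 2 / 4)) :
    (∀ a : ℝ, 0 ≤ a → f a ≤ f (-2 + Real.sqrt (2 * (1 + lam)))) ∧
    (∀ b : ℝ, 0 ≤ b → g b ≤ g (2 + Real.sqrt (2 * (1 + lam)))) := by
  have hp : 0 < lam - 1 := by linarith
  have hf' : f = fun a => 2 * M * profile (lam - 1) (-2) a := by
    ext a; rw [hf, profile]; ring
  have hg' : g = fun b => 2 * M * profile (lam - 1) 2 b := by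
    ext b; rw [hg, profile]; ring
  have hpeak (κ : ℝ) (hκ : κ ^ 2 = 4) : peak (lam - 1) κ = κ + √(2 * (1 + lam)) := by
    rw [peak, hκ]; ring_nf
  refine ⟨fun a ha => ?_, fun b hb => ?_⟩
  · rw [hf', ← hpeak (-2) (by norm_num)]
    exact mul_le_mul_of_nonneg_left (profile_le_profile_peak _ hp ha) (by positivity)
  · rw [hg', ← hpeak 2 (by norm_num)]
    exact mul_le_mul_of_nonneg_left (profile_le_profile_peak _ hp hb) (by positivity)
end

section
/- For λ > λ₀ := (28 + 11√7)/9, define h_λ(s) = e^{−s²/4} s^λ and H_λ(s) = h_λ(s−2) + h_λ(s+2). Then H_λ''(s) > 0 for every s ∈ (√(2(λ+2)), √(2(λ+3))). -/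
/-!
For `t > 0`, `h_λ''(t) = e^{-t²/4} t^{λ-2} ((t² - (2λ+1))² - (8λ+1)) / 4`, so `h_λ` is strictly
convex wherever `|t² - (2λ+1)| > √(8λ+1)`. Since `H_λ'' (s) = h_λ''(s-2) + h_λ''(s+2)`, it suffices
that `s - 2` lies below and `s + 2` above this inflection band. For `s > √(2(λ+2))` the point
`s + 2` is above it for every `λ ≥ 0`; for `s < √(2(λ+3))` the point `s - 2` is below it as soon as
`9 + √(8λ+1) ≤ 4√(2(λ+3))`, which holds for `λ ≥ 4`.
-/

open Real Filter Topology

noncomputable def gaussPow (lam t : ℝ) : ℝ := exp (-t ^ 2 / 4) * t ^ lam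

lemma hasDerivAt_exp_neg_sq_div_four (t : ℝ) :
    HasDerivAt (fun u : ℝ => exp (-u ^ 2 / 4)) (exp (-t ^ 2 / 4) * (-t / 2)) t := by
  refine ((hasDerivAt_pow 2 t).neg.div_const 4).exp.congr_deriv ?_
  simp only [Pi.neg_apply]
  push_cast
  ring

section gaussPow

variable {lam t : ℝ}

lemma hasDerivAt_gaussPow (ht : 0 < t) :
    HasDerivAt (gaussPow lam) (exp (-t ^ 2 / 4) * t ^ (lam - 1) * (lam - t ^ 2 / 2)) t := by
  have hexp := hasDerivAt_exp_neg_sq_div_four t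
  refine (hexp.mul (hasDerivAt_rpow_const (p := lam) (Or.inl ht.ne'))).congr_deriv ?_
  rw [rpow_sub_one ht.ne']
  field_simp
  ring

lemma hasDerivAt_deriv_gaussPow (ht : 0 < t) :
    HasDerivAt (deriv (gaussPow lam))
      (exp (-t ^ 2 / 4) * t ^ (lam - 2) * (((t ^ 2 - (2 * lam + 1)) ^ 2 - (8 * lam + 1)) / 4))
      t := by
  have hderiv : deriv (gaussPow lam) =ᶠ[𝓝 t]
      fun u => exp (-u ^ 2 / 4) * u ^ (lam - 1) * (lam - u ^ 2 / 2) := by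
    filter_upwards [Ioi_mem_nhds ht] with u hu
    exact (hasDerivAt_gaussPow hu).deriv
  refine HasDerivAt.congr_of_eventuallyEq ?_ hderiv
  have hexp := hasDerivAt_exp_neg_sq_div_four t
  have hpow := hasDerivAt_rpow_const (p := lam - 1) (Or.inl ht.ne')
  have hpoly : HasDerivAt (fun u : ℝ => lam - u ^ 2 / 2) (-t) t := by
    refine (((hasDerivAt_pow 2 t).div_const 2).const_sub lam).congr_deriv ?_
    push_cast
    ring
  refine ((hexp.mul hpow).mul hpoly).congr_deriv ?_
  simp only [Pi.mul_apply]
  rw [show lam - 1 - 1 = lam - 2 by ring, show lam - 1 = lam - 2 + 1 by ring,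
    rpow_add_one ht.ne']
  ring

lemma deriv_deriv_gaussPow_pos (ht : 0 < t) (h : √(8 * lam + 1) < |t ^ 2 - (2 * lam + 1)|) :
    0 < deriv (deriv (gaussPow lam)) t := by
  rw [(hasDerivAt_deriv_gaussPow ht).deriv]
  have hquartic : 0 < (t ^ 2 - (2 * lam + 1)) ^ 2 - (8 * lam + 1) := by
    rw [sub_pos, ← sq_abs]
    exact (sqrt_lt' ((sqrt_nonneg _).trans_lt h)).mp h
  exact mul_pos (mul_pos (exp_pos _) (rpow_pos_of_pos ht _)) (div_pos hquartic four_pos)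

end gaussPow

lemma deriv_deriv_comp_sub_add_const {f : ℝ → ℝ} {c s : ℝ}
    (hf : ∀ᶠ x in 𝓝 s, DifferentiableAt ℝ f (x - c) ∧ DifferentiableAt ℝ f (x + c))
    (hf'_sub : DifferentiableAt ℝ (deriv f) (s - c))
    (hf'_add : DifferentiableAt ℝ (deriv f) (s + c)) :
    deriv (deriv fun x => f (x - c) + f (x + c)) s
      = deriv (deriv f) (s - c) + deriv (deriv f) (s + c) := by
  have hderiv : deriv (fun x => f (x - c) + f (x + c)) =ᶠ[𝓝 s]
      fun x => deriv f (x - c) + deriv f (x + c) := by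
    filter_upwards [hf] with x ⟨hsub, hadd⟩
    rw [deriv_fun_add (differentiableAt_comp_sub_const.mpr hsub)
      (differentiableAt_comp_add_const.mpr hadd), deriv_comp_sub_const, deriv_comp_add_const]
  rw [hderiv.deriv_eq, deriv_fun_add (differentiableAt_comp_sub_const.mpr hf'_sub)
    (differentiableAt_comp_add_const.mpr hf'_add), deriv_comp_sub_const, deriv_comp_add_const]

lemma nine_add_sqrt_le (lam : ℝ) (hlam : 4 ≤ lam) :
    9 + √(8 * lam + 1) ≤ 4 * √(2 * (lam + 3)) := by
  have hA : 9 * √(8 * lam + 1) ≤ 12 * lam + 7 := by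
    rw [← le_div_iff₀' (by norm_num), sqrt_le_iff]
    constructor <;> nlinarith
  have hA2 := sq_sqrt (show 0 ≤ 8 * lam + 1 by linarith)
  have hB2 := sq_sqrt (show 0 ≤ 2 * (lam + 3) by linarith)
  nlinarith [sqrt_nonneg (8 * lam + 1), sqrt_nonneg (2 * (lam + 3))]

lemma sqrt_lt_abs_sub_two (lam s : ℝ) (hlam : 4 ≤ lam) (hs2 : 2 < s)
    (hs : s < √(2 * (lam + 3))) :
    √(8 * lam + 1) < |(s - 2) ^ 2 - (2 * lam + 1)| := by
  have hB2 := sq_sqrt (show 0 ≤ 2 * (lam + 3) by linarith)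
  have hsq : (s - 2) ^ 2 < (√(2 * (lam + 3)) - 2) ^ 2 := by nlinarith
  have hbelow : (s - 2) ^ 2 < 2 * lam + 1 - √(8 * lam + 1) := by
    nlinarith [nine_add_sqrt_le lam hlam]
  rw [abs_of_neg (by linarith [sqrt_nonneg (8 * lam + 1)])]
  linarith

lemma sqrt_lt_abs_add_two (lam s : ℝ) (hlam : 0 ≤ lam) (hs : √(2 * (lam + 2)) < s) :
    √(8 * lam + 1) < |(s + 2) ^ 2 - (2 * lam + 1)| := by
  set C := √(2 * (lam + 2))
  have hC2 : C ^ 2 = 2 * (lam + 2) := sq_sqrt (by linarith)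
  have hC0 : 0 ≤ C := sqrt_nonneg _
  have hA : √(8 * lam + 1) < 7 + 4 * C := by
    rw [sqrt_lt' (by linarith)]
    nlinarith
  have habove : 2 * lam + 1 + √(8 * lam + 1) < (s + 2) ^ 2 := by nlinarith
  rw [abs_of_pos (by linarith [sqrt_nonneg (8 * lam + 1)])]
  linarith

/-- Convexity of `H_λ` on `(r_{λ+3}, r_{λ+4}) = (√(2(λ+2)), √(2(λ+3)))` for
`λ > λ₀ = (28 + 11√7)/9`, where `H_λ(s) = e^{-(s-2)²/4}(s-2)^λ + e^{-(s+2)²/4}(s+2)^λ`. -/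
theorem H_convex_on_interval (lam : ℝ) (hlam : (28 + 11 * Real.sqrt 7) / 9 < lam)
    (H : ℝ → ℝ)
    (hH : ∀ s : ℝ, H s
        = exp (-(s - 2) ^ 2 / 4) * (s - 2) ^ lam + exp (-(s + 2) ^ 2 / 4) * (s + 2) ^ lam) :
    ∀ s ∈ Set.Ioo (Real.sqrt (2 * (lam + 2))) (Real.sqrt (2 * (lam + 3))),
      0 < deriv (deriv H) s := by
  have hlam4 : 4 ≤ lam := by
    have : 1 ≤ √7 := one_le_sqrt.mpr (by norm_num)
    linarith
  rintro s ⟨hs_lo, hs_hi⟩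
  have hs2 : 2 < s := by
    have : 2 ≤ √(2 * (lam + 2)) := le_sqrt_of_sq_le (by linarith)
    linarith
  have hHeq : H = fun x => gaussPow lam (x - 2) + gaussPow lam (x + 2) := funext hH
  have hdiff : ∀ t, 0 < t → DifferentiableAt ℝ (deriv (gaussPow lam)) t := fun t ht =>
    (hasDerivAt_deriv_gaussPow ht).differentiableAt
  rw [hHeq, deriv_deriv_comp_sub_add_const ?_ (hdiff _ (by linarith)) (hdiff _ (by linarith))]
  · exact add_pos
      (deriv_deriv_gaussPow_pos (by linarith) (sqrt_lt_abs_sub_two lam s hlam4 hs2 hs_hi))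
      (deriv_deriv_gaussPow_pos (by linarith) (sqrt_lt_abs_add_two lam s (by linarith) hs_lo))
  · filter_upwards [Ioi_mem_nhds hs2] with x (hx : 2 < x)
    exact ⟨(hasDerivAt_gaussPow (by linarith)).differentiableAt,
      (hasDerivAt_gaussPow (by linarith)).differentiableAt⟩
end

section
/- For every real λ > λ₀ := (28 + 11√7)/9, one has √(2λ + 1 − √(8λ+1)) > √(2(λ+4)) − 2. -/
open Real

/-- For `λ > λ₀ = (28 + 11√7)/9`, one has `√(2λ+1-√(8λ+1)) > √(2(λ+4)) - 2`. -/
theorem s0_gt (lam : ℝ) (hlam : (28 + 11 * Real.sqrt 7) / 9 < lam) :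
    Real.sqrt (2 * lam + 1 - Real.sqrt (8 * lam + 1)) > Real.sqrt (2 * (lam + 4)) - 2 := by
  have h7 : Real.sqrt 7 ^ 2 = 7 := Real.sq_sqrt (by norm_num)
  have h7n : (0:ℝ) ≤ Real.sqrt 7 := Real.sqrt_nonneg 7
  have h7gt : Real.sqrt 7 > 2.5 := by nlinarith [h7, h7n]
  have hl6 : lam > 6 := by nlinarith
  have quad : 9 * lam ^ 2 - 56 * lam - 7 > 0 := by
    have h1 : lam - (28 + 11 * Real.sqrt 7) / 9 > 0 := by linarith
    have h2 : lam - (28 - 11 * Real.sqrt 7) / 9 > 0 := by nlinarith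
    nlinarith [mul_pos h1 h2, h7]
  set s := Real.sqrt (8 * lam + 1) with hs
  have hs2 : s ^ 2 = 8 * lam + 1 := Real.sq_sqrt (by linarith)
  have hsn : (0:ℝ) ≤ s := Real.sqrt_nonneg _
  have step1 : 11 * s < 12 * lam + 3 := by nlinarith [quad, hs2, hsn]
  set t := Real.sqrt (2 * (lam + 4)) with ht
  have ht2 : t ^ 2 = 2 * (lam + 4) := Real.sq_sqrt (by linarith)
  have htn : (0:ℝ) ≤ t := Real.sqrt_nonneg _
  have htg : t > 2 := by nlinarith [ht2, htn]
  have step2 : 11 + s < 4 * t := by nlinarith [step1, hs2, ht2, hsn, htn]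
  rw [gt_iff_lt]; show t - 2 < _
  rw [Real.lt_sqrt (by linarith)]
  nlinarith [ht2, step2]
end

section
/- For every real λ > 1, setting r = √(2(λ+2)) (so r > 2), one has e^{−2r} · ((r+2)/(r−2))^λ < 1. Equivalently, with h_λ(s) = e^{−s²/4} s^λ and H_λ(s) = h_λ(s−2)+h_λ(s+2), one has H_λ'(√(2(λ+2))) > 0. -/
open Real

lemma key_log' (r : ℝ) (hr : 2 < r) :
    Real.log ((r + 2) / (r - 2)) < 4 / Real.sqrt (r ^ 2 - 4) := by
  have h2 : (0:ℝ) < r - 2 := by linarith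
  have h3 : (0:ℝ) < r + 2 := by linarith
  set t : ℝ := Real.sqrt ((r + 2) / (r - 2)) with ht
  have htpos : 0 < t := Real.sqrt_pos.mpr (by positivity)
  have ht1 : 1 < t := by
    rw [ht, show (1:ℝ) = Real.sqrt 1 by simp]
    apply Real.sqrt_lt_sqrt (by norm_num)
    rw [lt_div_iff₀ h2]; linarith
  have htsq : t ^ 2 = (r + 2) / (r - 2) := Real.sq_sqrt (by positivity)
  have hlog : Real.log ((r + 2) / (r - 2)) = 2 * Real.log t := by
    rw [← htsq, Real.log_pow]; push_cast; ring
  have hu : 0 < Real.log t := Real.log_pos ht1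
  have hsinh : Real.log t < Real.sinh (Real.log t) := Real.self_lt_sinh_iff.mpr hu
  have hsinh_eq : Real.sinh (Real.log t) = (t - 1 / t) / 2 := by
    rw [Real.sinh_eq, Real.exp_log htpos, Real.exp_neg, Real.exp_log htpos, one_div]
  have hspos : 0 < Real.sqrt (r ^ 2 - 4) := Real.sqrt_pos.mpr (by nlinarith)
  have hteq : t - 1 / t = 4 / Real.sqrt (r ^ 2 - 4) := by
    have hs : Real.sqrt (r ^ 2 - 4) = Real.sqrt (r + 2) * Real.sqrt (r - 2) := by
      rw [← Real.sqrt_mul (by linarith)]; ring_nf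
    have htdiv : t = Real.sqrt (r + 2) / Real.sqrt (r - 2) := by
      rw [ht, Real.sqrt_div (by linarith)]
    have hp : Real.sqrt (r + 2) ^ 2 = r + 2 := Real.sq_sqrt (by linarith)
    have hm : Real.sqrt (r - 2) ^ 2 = r - 2 := Real.sq_sqrt (by linarith)
    have hppos : 0 < Real.sqrt (r + 2) := Real.sqrt_pos.mpr h3
    have hmpos : 0 < Real.sqrt (r - 2) := Real.sqrt_pos.mpr h2
    rw [htdiv, hs]
    field_simp
    nlinarith [hp, hm]
  rw [hlog, ← hteq]
  nlinarith [hsinh, hsinh_eq]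

/-- `Q_λ = e^{-2r}((r+2)/(r-2))^λ < 1` with `r = √(2(λ+2))`; equivalently
`H_λ'(√(2(λ+2))) > 0`. -/
theorem Q_lt_one (lam : ℝ) (hlam : 1 < lam)
    (H : ℝ → ℝ)
    (hH : ∀ s : ℝ, H s
        = exp (-(s - 2) ^ 2 / 4) * (s - 2) ^ lam + exp (-(s + 2) ^ 2 / 4) * (s + 2) ^ lam) :
    exp (-(2 * Real.sqrt (2 * (lam + 2)))) *
        ((Real.sqrt (2 * (lam + 2)) + 2) / (Real.sqrt (2 * (lam + 2)) - 2)) ^ lam < 1 ∧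
      0 < deriv H (Real.sqrt (2 * (lam + 2))) := by
  set r : ℝ := Real.sqrt (2 * (lam + 2)) with hrdef
  have hr2 : 2 < r := by
    rw [hrdef]
    have : (2:ℝ) ^ 2 < 2 * (lam + 2) := by nlinarith
    exact (Real.lt_sqrt (by norm_num)).mpr this
  have hrsq : r ^ 2 = 2 * (lam + 2) := Real.sq_sqrt (by nlinarith)
  have ha : (0:ℝ) < r - 2 := by linarith
  have hb : (0:ℝ) < r + 2 := by linarith
  have hcpos : 0 < Real.sqrt (r ^ 2 - 4) := Real.sqrt_pos.mpr (by nlinarith)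
  have hcsq : Real.sqrt (r ^ 2 - 4) ^ 2 = r ^ 2 - 4 := Real.sq_sqrt (by nlinarith)
  have hclt : Real.sqrt (r ^ 2 - 4) < r := by nlinarith [hcsq, hcpos]
  have hlameq : lam = (r ^ 2 - 4) / 2 := by nlinarith
  -- main log inequality
  have hmain : lam * Real.log ((r + 2) / (r - 2)) < 2 * r := by
    have hL := key_log' r hr2
    have hlam0 : 0 < lam := by linarith
    have h1 : lam * Real.log ((r + 2) / (r - 2)) < lam * (4 / Real.sqrt (r ^ 2 - 4)) :=
      (mul_lt_mul_iff_right₀ hlam0).mpr hL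
    have h2 : lam * (4 / Real.sqrt (r ^ 2 - 4)) = 2 * Real.sqrt (r ^ 2 - 4) := by
      rw [hlameq]
      field_simp
      nlinarith [hcsq]
    rw [h2] at h1
    linarith
  -- Q < 1
  have hQ : exp (-(2 * r)) * ((r + 2) / (r - 2)) ^ lam < 1 := by
    rw [Real.rpow_def_of_pos (by positivity), ← Real.exp_add]
    calc Real.exp (-(2 * r) + Real.log ((r + 2) / (r - 2)) * lam) < Real.exp 0 :=
          Real.exp_lt_exp.mpr (by nlinarith)
      _ = 1 := Real.exp_zero
  refine ⟨hQ, ?_⟩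
  -- derivative computation
  have hda : HasDerivAt (fun s : ℝ => s - 2) 1 r := (hasDerivAt_id r).sub_const 2
  have hdb : HasDerivAt (fun s : ℝ => s + 2) 1 r := (hasDerivAt_id r).add_const 2
  have hpa : HasDerivAt (fun s : ℝ => (s - 2) ^ lam)
      (1 * lam * (r - 2) ^ (lam - 1)) r :=
    hda.rpow_const (Or.inl (ne_of_gt ha))
  have hpb : HasDerivAt (fun s : ℝ => (s + 2) ^ lam)
      (1 * lam * (r + 2) ^ (lam - 1)) r :=
    hdb.rpow_const (Or.inl (ne_of_gt hb))
  have hga : HasDerivAt (fun s : ℝ => -(s - 2) ^ 2 / 4)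
      (-(2 * (r - 2) ^ 1 * 1) / 4) r := ((hda.pow 2).neg.div_const 4)
  have hgb : HasDerivAt (fun s : ℝ => -(s + 2) ^ 2 / 4)
      (-(2 * (r + 2) ^ 1 * 1) / 4) r := ((hdb.pow 2).neg.div_const 4)
  have hea : HasDerivAt (fun s : ℝ => Real.exp (-(s - 2) ^ 2 / 4))
      (Real.exp (-(r - 2) ^ 2 / 4) * (-(2 * (r - 2) ^ 1 * 1) / 4)) r := hga.exp
  have heb : HasDerivAt (fun s : ℝ => Real.exp (-(s + 2) ^ 2 / 4))
      (Real.exp (-(r + 2) ^ 2 / 4) * (-(2 * (r + 2) ^ 1 * 1) / 4)) r := hgb.exp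
  have hD : HasDerivAt H
      ((Real.exp (-(r - 2) ^ 2 / 4) * (-(2 * (r - 2) ^ 1 * 1) / 4) * (r - 2) ^ lam
        + Real.exp (-(r - 2) ^ 2 / 4) * (1 * lam * (r - 2) ^ (lam - 1)))
       + (Real.exp (-(r + 2) ^ 2 / 4) * (-(2 * (r + 2) ^ 1 * 1) / 4) * (r + 2) ^ lam
        + Real.exp (-(r + 2) ^ 2 / 4) * (1 * lam * (r + 2) ^ (lam - 1)))) r := by
    have hfun : H = fun s => Real.exp (-(s - 2) ^ 2 / 4) * (s - 2) ^ lam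
        + Real.exp (-(s + 2) ^ 2 / 4) * (s + 2) ^ lam := funext hH
    rw [hfun]
    exact (hea.mul hpa).add (heb.mul hpb)
  rw [hD.deriv]
  -- positivity
  have hasplit : (r - 2) ^ lam = (r - 2) ^ (lam - 1) * (r - 2) := by
    rw [show lam = lam - 1 + 1 by ring, Real.rpow_add_one (ne_of_gt ha)]
    ring_nf
  have hbsplit : (r + 2) ^ lam = (r + 2) ^ (lam - 1) * (r + 2) := by
    rw [show lam = lam - 1 + 1 by ring, Real.rpow_add_one (ne_of_gt hb)]
    ring_nf
  have he1 : (0:ℝ) < Real.exp (-(r - 2) ^ 2 / 4) := Real.exp_pos _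
  have hpapos : (0:ℝ) < (r - 2) ^ lam := Real.rpow_pos_of_pos ha lam
  have heeq : Real.exp (-(r + 2) ^ 2 / 4)
      = Real.exp (-(r - 2) ^ 2 / 4) * Real.exp (-(2 * r)) := by
    rw [← Real.exp_add]; congr 1; ring
  have hdivQ : Real.exp (-(2 * r)) * (r + 2) ^ lam < (r - 2) ^ lam := by
    have hQ' := hQ
    rw [Real.div_rpow (le_of_lt hb) (le_of_lt ha)] at hQ'
    calc Real.exp (-(2 * r)) * (r + 2) ^ lam
        = (Real.exp (-(2 * r)) * ((r + 2) ^ lam / (r - 2) ^ lam)) * (r - 2) ^ lam := by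
          field_simp
      _ < 1 * (r - 2) ^ lam := mul_lt_mul_of_pos_right hQ' hpapos
      _ = (r - 2) ^ lam := one_mul _
  have hkey : Real.exp (-(r + 2) ^ 2 / 4) * (r + 2) ^ lam
      < Real.exp (-(r - 2) ^ 2 / 4) * (r - 2) ^ lam := by
    rw [heeq, mul_assoc]
    exact mul_lt_mul_of_pos_left hdivQ he1
  have hDval :
      (Real.exp (-(r - 2) ^ 2 / 4) * (-(2 * (r - 2) ^ 1 * 1) / 4) * (r - 2) ^ lam
        + Real.exp (-(r - 2) ^ 2 / 4) * (1 * lam * (r - 2) ^ (lam - 1)))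
       + (Real.exp (-(r + 2) ^ 2 / 4) * (-(2 * (r + 2) ^ 1 * 1) / 4) * (r + 2) ^ lam
        + Real.exp (-(r + 2) ^ 2 / 4) * (1 * lam * (r + 2) ^ (lam - 1)))
      = 2 * (Real.exp (-(r - 2) ^ 2 / 4) * (r - 2) ^ lam
          - Real.exp (-(r + 2) ^ 2 / 4) * (r + 2) ^ lam) := by
    rw [hasplit, hbsplit]
    linear_combination (Real.exp (-(r - 2) ^ 2 / 4) * ((r - 2) ^ (lam - 1))
      + Real.exp (-(r + 2) ^ 2 / 4) * ((r + 2) ^ (lam - 1))) * hlameq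
  rw [hDval]
  linarith [hkey]
end

section
/- Let λ > 1 and r_λ = √(2(λ−1)). Let I ⊆ (0, ∞) be an open interval and let f : I → ℝ be a positive, twice continuously differentiable solution of f''/(1 + (f')²) = (r/2 − (λ−1)/r) f' − f/2 on I. Then: (i) f has no local minimum at any interior point of I; (ii) if f'(ρ₀) ≥ 0 for some ρ₀ ∈ (0, r_λ) ∩ I, then f''(r) < 0 for all r ∈ (ρ₀, r_λ) ∩ I; (iii) if f'(ρ₀) ≤ 0 for some ρ₀ ∈ (r_λ, ∞) ∩ I, then f''(r) < 0 for all r ∈ (r_λ, ρ₀) ∩ I. -/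
open Real Set Filter Topology

/-!
Write the equation as `f'' = (1 + f'²) R` with `R = c f' - f / 2` (`geodesicRhs`) and
`c r = r / 2 - (λ - 1) / r` (`geodesicCoeff`), which is negative on `(0, r_λ)` and positive
on `(r_λ, ∞)`. At a critical point `R = -f / 2 < 0`, so `f'' < 0` and `f` has no local minimum.
At a zero of `R` we have `f'' = 0` and `c f' = f / 2 > 0`, so `R' = (λ - 1) f' / r²` has the
sign of `c`: `R` can only cross zero downwards on `(0, r_λ)` and upwards on `(r_λ, ∞)`.
As `R ρ₀ < 0` whenever `c ρ₀ f' ρ₀ ≤ 0`, `R`, and with it `f''`, stays negative to the right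
of `ρ₀` in (ii) and to the left of `ρ₀` in (iii).
-/

theorem ContDiffOn.differentiableAt_deriv {f : ℝ → ℝ} {s : Set ℝ} {x : ℝ}
    (hf : ContDiffOn ℝ 2 f s) (hs : IsOpen s) (hx : x ∈ s) : DifferentiableAt ℝ (deriv f) x :=
  ((hf.deriv_of_isOpen hs (by norm_num)).differentiableOn one_ne_zero).differentiableAt
    (hs.mem_nhds hx)

theorem IsLocalMin.deriv_deriv_nonneg {f : ℝ → ℝ} {x₀ : ℝ} (h : IsLocalMin f x₀)
    (hc : ContinuousAt f x₀) : 0 ≤ deriv (deriv f) x₀ := by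
  by_contra! hneg
  have hconst : f =ᶠ[𝓝 x₀] fun _ => f x₀ :=
    (h.and (isLocalMax_of_deriv_deriv_neg hneg h.deriv_eq_zero hc)).mono
      fun _ hx => le_antisymm hx.2 hx.1
  have hzero : deriv (deriv f) x₀ = 0 := by
    rw [hconst.deriv.deriv_eq]
    simp
  exact hneg.ne hzero

theorem neg_of_deriv_neg_at_zeros {u : ℝ → ℝ} {a b : ℝ}
    (hu : ∀ x ∈ Icc a b, DifferentiableAt ℝ u x) (ha : u a < 0)
    (hzero : ∀ x ∈ Icc a b, u x = 0 → deriv u x < 0) : ∀ x ∈ Icc a b, u x < 0 := by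
  have hle : ∀ x ∈ Icc a b, u x ≤ 0 :=
    image_le_of_deriv_right_lt_deriv_boundary' (B := fun _ => 0) (B' := fun _ => 0)
      (fun x hx => (hu x hx).continuousAt.continuousWithinAt)
      (fun x hx => (hu x (Ico_subset_Icc_self hx)).hasDerivAt.hasDerivWithinAt) ha.le
      continuousOn_const (fun _ _ => hasDerivWithinAt_const _ _ _)
      (fun x hx hx0 => hzero x (Ico_subset_Icc_self hx) hx0)
  intro x hx
  refine (hle x hx).lt_of_ne fun hx0 => ?_
  have hax : a < x := hx.1.lt_of_ne fun h => by rw [← h] at hx0; exact ha.ne hx0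
  -- a zero with negative derivative is approached from the left through positive values
  have hpos : ∀ᶠ y in 𝓝[<] x, 0 < u y := by
    filter_upwards [nhdsWithin_le_nhds
      (eventually_nhdsWithin_sign_eq_of_deriv_neg (hzero x hx hx0) hx0),
      self_mem_nhdsWithin] with y hy (hyx : y < x)
    rwa [sign_pos (sub_pos.2 hyx), sign_eq_one_iff] at hy
  have hnonpos : ∀ᶠ y in 𝓝[<] x, u y ≤ 0 := by
    filter_upwards [Ioo_mem_nhdsLT hax] with y hy
    exact hle y ⟨hy.1.le, hy.2.le.trans hx.2⟩
  obtain ⟨y, hy, hy'⟩ := (hpos.and hnonpos).exists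
  exact hy.not_ge hy'

theorem neg_of_deriv_pos_at_zeros {u : ℝ → ℝ} {a b : ℝ}
    (hu : ∀ x ∈ Icc a b, DifferentiableAt ℝ u x) (hb : u b < 0)
    (hzero : ∀ x ∈ Icc a b, u x = 0 → 0 < deriv u x) : ∀ x ∈ Icc a b, u x < 0 := by
  have hmem : ∀ {x}, x ∈ Icc (-b) (-a) → -x ∈ Icc a b := fun hx =>
    ⟨by linarith [hx.2], by linarith [hx.1]⟩
  have hreflected := neg_of_deriv_neg_at_zeros (u := fun x => u (-x)) (a := -b) (b := -a)
    (fun x hx => (hu _ (hmem hx)).comp x differentiableAt_id.neg) (by simpa using hb)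
    (fun x hx hx0 => by rw [deriv_comp_neg]; linarith [hzero _ (hmem hx) hx0])
  intro x hx
  simpa using hreflected (-x) ⟨neg_le_neg hx.2, neg_le_neg hx.1⟩

noncomputable def geodesicCoeff (lam r : ℝ) : ℝ := r / 2 - (lam - 1) / r

noncomputable def geodesicRhs (lam : ℝ) (f : ℝ → ℝ) (r : ℝ) : ℝ :=
  geodesicCoeff lam r * deriv f r - f r / 2

section

variable {lam r : ℝ} {f : ℝ → ℝ}

theorem geodesicCoeff_neg (hr : 0 < r) (hrl : r < √(2 * (lam - 1))) :
    geodesicCoeff lam r < 0 := by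
  have hsq : r ^ 2 < 2 * (lam - 1) := (Real.lt_sqrt hr.le).1 hrl
  rw [geodesicCoeff, sub_neg, div_lt_div_iff₀ two_pos hr]
  nlinarith

theorem geodesicCoeff_pos (hrl : √(2 * (lam - 1)) < r) : 0 < geodesicCoeff lam r := by
  have hr : 0 < r := (Real.sqrt_nonneg _).trans_lt hrl
  have hsq : 2 * (lam - 1) < r ^ 2 := (Real.sqrt_lt' hr).1 hrl
  rw [geodesicCoeff, sub_pos, div_lt_div_iff₀ hr two_pos]
  nlinarith

theorem hasDerivAt_geodesicCoeff (hr : r ≠ 0) :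
    HasDerivAt (geodesicCoeff lam) (1 / 2 + (lam - 1) / r ^ 2) r := by
  have h := ((hasDerivAt_id r).div_const 2).sub
    ((hasDerivAt_const r (lam - 1)).div (hasDerivAt_id r) hr)
  exact h.congr_deriv (by simp only [id_eq]; ring)

theorem hasDerivAt_geodesicRhs (hf : DifferentiableAt ℝ f r)
    (hf' : DifferentiableAt ℝ (deriv f) r) (hr : r ≠ 0) :
    HasDerivAt (geodesicRhs lam f)
      ((lam - 1) / r ^ 2 * deriv f r + geodesicCoeff lam r * deriv (deriv f) r) r := by
  have h := ((hasDerivAt_geodesicCoeff (lam := lam) hr).mul hf'.hasDerivAt).sub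
    (hf.hasDerivAt.div_const 2)
  exact h.congr_deriv (by ring)

theorem deriv_deriv_eq_mul_geodesicRhs
    (heq : deriv (deriv f) r / (1 + deriv f r ^ 2) = geodesicRhs lam f r) :
    deriv (deriv f) r = (1 + deriv f r ^ 2) * geodesicRhs lam f r := by
  rw [← heq, mul_div_cancel₀]
  positivity

theorem deriv_deriv_neg_iff
    (heq : deriv (deriv f) r / (1 + deriv f r ^ 2) = geodesicRhs lam f r) :
    deriv (deriv f) r < 0 ↔ geodesicRhs lam f r < 0 := by
  have hpos : 0 < 1 + deriv f r ^ 2 := by positivity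
  rw [deriv_deriv_eq_mul_geodesicRhs heq]
  exact ⟨fun h => neg_of_mul_neg_right h hpos.le, mul_neg_of_pos_of_neg hpos⟩

theorem deriv_deriv_neg_of_deriv_eq_zero (hfr : 0 < f r)
    (heq : deriv (deriv f) r / (1 + deriv f r ^ 2) = geodesicRhs lam f r)
    (hcrit : deriv f r = 0) : deriv (deriv f) r < 0 := by
  rw [deriv_deriv_neg_iff heq, geodesicRhs, hcrit]
  linarith

theorem geodesicRhs_neg_of_mul_nonpos (hfr : 0 < f r)
    (hslope : geodesicCoeff lam r * deriv f r ≤ 0) : geodesicRhs lam f r < 0 := by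
  rw [geodesicRhs]
  linarith

theorem deriv_geodesicRhs_mul_geodesicCoeff_pos (hlam : 1 < lam) (hr : 0 < r)
    (hf : DifferentiableAt ℝ f r) (hf' : DifferentiableAt ℝ (deriv f) r) (hfr : 0 < f r)
    (heq : deriv (deriv f) r / (1 + deriv f r ^ 2) = geodesicRhs lam f r)
    (hzero : geodesicRhs lam f r = 0) :
    0 < deriv (geodesicRhs lam f) r * geodesicCoeff lam r := by
  have hf'' : deriv (deriv f) r = 0 := by rw [deriv_deriv_eq_mul_geodesicRhs heq, hzero, mul_zero]
  have hslope : geodesicCoeff lam r * deriv f r = f r / 2 := by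
    rw [geodesicRhs, sub_eq_zero] at hzero
    exact hzero
  rw [(hasDerivAt_geodesicRhs hf hf' hr.ne').deriv, hf'', mul_zero, add_zero, mul_assoc,
    mul_comm (deriv f r), hslope]
  have : 0 < lam - 1 := sub_pos.2 hlam
  positivity

variable {ρ : ℝ} {s : Set ℝ}
  (hf : ∀ x ∈ s, DifferentiableAt ℝ f x) (hf' : ∀ x ∈ s, DifferentiableAt ℝ (deriv f) x)
  (hpos : ∀ x ∈ s, 0 < f x)
  (heq : ∀ x ∈ s, deriv (deriv f) x / (1 + deriv f x ^ 2) = geodesicRhs lam f x)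
include hf hf' hpos heq

theorem deriv_deriv_neg_of_deriv_nonneg_of_lt_sqrt (hlam : 1 < lam) (hs : Icc ρ r ⊆ s)
    (hρ : 0 < ρ) (hρr : ρ ≤ r) (hr : r < √(2 * (lam - 1))) (hfρ : 0 ≤ deriv f ρ) :
    deriv (deriv f) r < 0 := by
  have hcoeff : ∀ x ∈ Icc ρ r, geodesicCoeff lam x < 0 := fun x hx =>
    geodesicCoeff_neg (hρ.trans_le hx.1) (hx.2.trans_lt hr)
  have hρs : ρ ∈ s := hs ⟨le_rfl, hρr⟩
  rw [deriv_deriv_neg_iff (heq r (hs ⟨hρr, le_rfl⟩))]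
  refine neg_of_deriv_neg_at_zeros (fun x hx => ?_) ?_ (fun x hx hx0 => ?_) r ⟨hρr, le_rfl⟩
  · exact (hasDerivAt_geodesicRhs (hf x (hs hx)) (hf' x (hs hx))
      (hρ.trans_le hx.1).ne').differentiableAt
  · exact geodesicRhs_neg_of_mul_nonpos (hpos ρ hρs)
      (mul_nonpos_of_nonpos_of_nonneg (hcoeff ρ ⟨le_rfl, hρr⟩).le hfρ)
  · exact neg_of_mul_pos_left (deriv_geodesicRhs_mul_geodesicCoeff_pos hlam
      (hρ.trans_le hx.1) (hf x (hs hx)) (hf' x (hs hx)) (hpos x (hs hx)) (heq x (hs hx)) hx0)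
      (hcoeff x hx).le

theorem deriv_deriv_neg_of_deriv_nonpos_of_sqrt_lt (hlam : 1 < lam) (hs : Icc r ρ ⊆ s)
    (hr : √(2 * (lam - 1)) < r) (hrρ : r ≤ ρ) (hfρ : deriv f ρ ≤ 0) :
    deriv (deriv f) r < 0 := by
  have hcoeff : ∀ x ∈ Icc r ρ, 0 < geodesicCoeff lam x := fun x hx =>
    geodesicCoeff_pos (hr.trans_le hx.1)
  have hxpos : ∀ x ∈ Icc r ρ, 0 < x := fun x hx =>
    (Real.sqrt_nonneg _).trans_lt (hr.trans_le hx.1)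
  have hρs : ρ ∈ s := hs ⟨hrρ, le_rfl⟩
  rw [deriv_deriv_neg_iff (heq r (hs ⟨le_rfl, hrρ⟩))]
  refine neg_of_deriv_pos_at_zeros (fun x hx => ?_) ?_ (fun x hx hx0 => ?_) r ⟨le_rfl, hrρ⟩
  · exact (hasDerivAt_geodesicRhs (hf x (hs hx)) (hf' x (hs hx))
      (hxpos x hx).ne').differentiableAt
  · exact geodesicRhs_neg_of_mul_nonpos (hpos ρ hρs)
      (mul_nonpos_of_nonneg_of_nonpos (hcoeff ρ ⟨hrρ, le_rfl⟩).le hfρ)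
  · exact pos_of_mul_pos_left (deriv_geodesicRhs_mul_geodesicCoeff_pos hlam
      (hxpos x hx) (hf x (hs hx)) (hf' x (hs hx)) (hpos x (hs hx)) (heq x (hs hx)) hx0)
      (hcoeff x hx).le

end

theorem graphical_geodesic_properties_general (lam : ℝ) (hlam : 1 < lam)
    (a b : ℝ) (I : Set ℝ) (hI : I = Set.Ioo a b)
    (f : ℝ → ℝ) (hreg : ContDiffOn ℝ 2 f I)
    (hpos : ∀ r ∈ I, 0 < f r)
    (heq : ∀ r ∈ I, deriv (deriv f) r / (1 + (deriv f r) ^ 2)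
        = (r / 2 - (lam - 1) / r) * deriv f r - f r / 2) :
    (∀ r ∈ I, ¬ IsLocalMin f r) ∧
    (∀ ρ ∈ Set.Ioo 0 (Real.sqrt (2 * (lam - 1))) ∩ I, 0 ≤ deriv f ρ →
      ∀ r ∈ Set.Ioo ρ (Real.sqrt (2 * (lam - 1))) ∩ I, deriv (deriv f) r < 0) ∧
    (∀ ρ ∈ Set.Ioi (Real.sqrt (2 * (lam - 1))) ∩ I, deriv f ρ ≤ 0 →
      ∀ r ∈ Set.Ioo (Real.sqrt (2 * (lam - 1))) ρ ∩ I, deriv (deriv f) r < 0) := by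
  subst hI
  have hf : ∀ x ∈ Ioo a b, DifferentiableAt ℝ f x := fun x hx =>
    (hreg.differentiableOn two_ne_zero).differentiableAt (isOpen_Ioo.mem_nhds hx)
  have hf' : ∀ x ∈ Ioo a b, DifferentiableAt ℝ (deriv f) x := fun x hx =>
    hreg.differentiableAt_deriv isOpen_Ioo hx
  refine ⟨fun r hr hmin => ?_, ?_, ?_⟩
  · exact (deriv_deriv_neg_of_deriv_eq_zero (hpos r hr) (heq r hr) hmin.deriv_eq_zero).not_ge
      (hmin.deriv_deriv_nonneg (hf r hr).continuousAt)
  · rintro ρ ⟨hρ, hρI⟩ hfρ r ⟨hr, hrI⟩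
    exact deriv_deriv_neg_of_deriv_nonneg_of_lt_sqrt hf hf' hpos heq hlam
      (ordConnected_Ioo.out hρI hrI) hρ.1 hr.1.le hr.2 hfρ
  · rintro ρ ⟨-, hρI⟩ hfρ r ⟨hr, hrI⟩
    exact deriv_deriv_neg_of_deriv_nonpos_of_sqrt_lt hf hf' hpos heq hlam
      (ordConnected_Ioo.out hrI hρI) hr.1 hr.2.le hfρ

/-- Properties of positive solutions of the graphical geodesic equation
`f''/(1 + f'²) = (r/2 - (λ-1)/r) f' - f/2` on an open interval `I ⊆ (0,∞)`:
(i) no local minimum; (ii) concavity to the right of a critical slope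
on `(0, r_λ)`; (iii) concavity to the left on `(r_λ, ∞)`, where `r_λ = √(2(λ-1))`. -/
theorem graphical_geodesic_properties (lam : ℝ) (hlam : 1 < lam)
    (a b : ℝ) (I : Set ℝ) (hI : I = Set.Ioo a b) (hsub : I ⊆ Set.Ioi 0)
    (f : ℝ → ℝ) (hreg : ContDiffOn ℝ 2 f I)
    (hpos : ∀ r ∈ I, 0 < f r)
    (heq : ∀ r ∈ I, deriv (deriv f) r / (1 + (deriv f r) ^ 2)
        = (r / 2 - (lam - 1) / r) * deriv f r - f r / 2) :
    (∀ r ∈ I, ¬ IsLocalMin f r) ∧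
    (∀ ρ ∈ Set.Ioo 0 (Real.sqrt (2 * (lam - 1))) ∩ I, 0 ≤ deriv f ρ →
      ∀ r ∈ Set.Ioo ρ (Real.sqrt (2 * (lam - 1))) ∩ I, deriv (deriv f) r < 0) ∧
    (∀ ρ ∈ Set.Ioi (Real.sqrt (2 * (lam - 1))) ∩ I, deriv f ρ ≤ 0 →
      ∀ r ∈ Set.Ioo (Real.sqrt (2 * (lam - 1))) ρ ∩ I, deriv (deriv f) r < 0) :=
  graphical_geodesic_properties_general lam hlam a b I hI f hreg hpos heq
end

section
/- Let λ > 1 and r_λ = √(2(λ−1)). Let r : [0, ∞) → (0, ∞) be a solution of the ODE r'(t) = r(t)(r(t)² − 2(λ−1)) / (2(r(t)² + λ − 1)) with r(0) = r₀ > 0. If r₀ < r_λ, then r(t) is nonincreasing and there exists a constant c > 0, depending only on r₀ and λ, such that r(t) ≥ r₀ e^{−ct} for all t ≥ 0. If r₀ > r_λ, then r(t) is nondecreasing and r(t) ≤ r₀ e^{t/2} for all t ≥ 0. In particular, under the flow with normal velocity V_g = k_g/K_g, no vertical line r = r₀ < r_λ reaches the x-axis in finite time, and no vertical line r = r₀ >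 r_λ goes to infinity in finite time. -/
/-!
The speed `F(ρ) = ρ(ρ² - 2(λ-1)) / (2(ρ² + λ - 1))` has the sign of `ρ - r_λ`, so the constant
`r₀` is a barrier for the flow: `r` stays on the side of `r₀` where it starts, hence on the same
side of `r_λ`, and is therefore monotone. For `ρ ≥ 0` we also have `-ρ ≤ F(ρ) ≤ ρ/2`, since
`F(ρ) + ρ = 3ρ³ / (2(ρ² + λ - 1))` and `ρ/2 - F(ρ) = 3(λ-1)ρ / (2(ρ² + λ - 1))`; Grönwall's
inequality then gives `r₀ e^{-t} ≤ r(t)` and `r(t) ≤ r₀ e^{t/2}`.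
-/

open Real Set

section ComparisonOnIci

variable {f f' : ℝ → ℝ} {a : ℝ}

theorem monotoneOn_Ici_of_hasDerivAt_nonneg (hf : ∀ t ∈ Ici a, HasDerivAt f (f' t) t)
    (hf' : ∀ t ∈ Ici a, 0 ≤ f' t) : MonotoneOn f (Ici a) :=
  monotoneOn_of_hasDerivWithinAt_nonneg (convex_Ici a)
    (fun t ht => (hf t ht).continuousAt.continuousWithinAt)
    (fun t ht => (hf t (interior_subset ht)).hasDerivWithinAt)
    (fun t ht => hf' t (interior_subset ht))

theorem antitoneOn_Ici_of_hasDerivAt_nonpos (hf : ∀ t ∈ Ici a, HasDerivAt f (f' t) t)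
    (hf' : ∀ t ∈ Ici a, f' t ≤ 0) : AntitoneOn f (Ici a) :=
  antitoneOn_of_hasDerivWithinAt_nonpos (convex_Ici a)
    (fun t ht => (hf t ht).continuousAt.continuousWithinAt)
    (fun t ht => (hf t (interior_subset ht)).hasDerivWithinAt)
    (fun t ht => hf' t (interior_subset ht))

theorem le_of_hasDerivAt_neg_of_eq {c : ℝ} (hf : ∀ t ∈ Ici a, HasDerivAt f (f' t) t)
    (hc : ∀ t ∈ Ici a, f t = c → f' t < 0) (ha : f a ≤ c) : ∀ t ∈ Ici a, f t ≤ c :=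
  fun _ ht => image_le_of_deriv_right_lt_deriv_boundary (B := fun _ => c) (B' := 0)
    (fun x hx => (hf x hx.1).continuousAt.continuousWithinAt)
    (fun x hx => (hf x hx.1).hasDerivWithinAt) ha (fun _ => hasDerivAt_const _ c)
    (fun x hx => hc x hx.1) ⟨ht, le_rfl⟩

theorem ge_of_hasDerivAt_pos_of_eq {c : ℝ} (hf : ∀ t ∈ Ici a, HasDerivAt f (f' t) t)
    (hc : ∀ t ∈ Ici a, f t = c → 0 < f' t) (ha : c ≤ f a) : ∀ t ∈ Ici a, c ≤ f t := by
  have hneg := le_of_hasDerivAt_neg_of_eq (c := -c) (fun t ht => (hf t ht).neg)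
    (fun t ht h => neg_neg_iff_pos.mpr (hc t ht (neg_inj.mp h))) (neg_le_neg ha)
  exact fun t ht => neg_le_neg_iff.mp (hneg t ht)

theorem le_mul_exp_of_hasDerivAt_le_mul {K : ℝ} (hf : ∀ t ∈ Ici a, HasDerivAt f (f' t) t)
    (hK : ∀ t ∈ Ici a, f' t ≤ K * f t) : ∀ t ∈ Ici a, f t ≤ f a * exp (K * (t - a)) := by
  intro t ht
  have h := le_gronwallBound_of_liminf_deriv_right_le (b := t) (ε := 0)
    (fun x hx => (hf x hx.1).continuousAt.continuousWithinAt)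
    (fun x hx _ hr => (hf x hx.1).hasDerivWithinAt.liminf_right_slope_le hr) le_rfl
    (fun x hx => by rw [add_zero]; exact hK x hx.1) t ⟨ht, le_rfl⟩
  rwa [gronwallBound_ε0] at h

theorem mul_exp_le_of_hasDerivAt_mul_le {K : ℝ} (hf : ∀ t ∈ Ici a, HasDerivAt f (f' t) t)
    (hK : ∀ t ∈ Ici a, K * f t ≤ f' t) : ∀ t ∈ Ici a, f a * exp (K * (t - a)) ≤ f t := by
  have hneg := le_mul_exp_of_hasDerivAt_le_mul (K := K) (fun t ht => (hf t ht).neg)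
    (fun t ht => by simp only [Pi.neg_apply]; linarith [hK t ht])
  exact fun t ht => by simp only [Pi.neg_apply] at hneg; linarith [hneg t ht]

end ComparisonOnIci

section VerticalLineSpeed

/-- `V_E = V_g / α`, the Euclidean horizontal speed of the vertical line `r = ρ`. -/
noncomputable def verticalLineSpeed (lam ρ : ℝ) : ℝ :=
  ρ * (ρ ^ 2 - 2 * (lam - 1)) / (2 * (ρ ^ 2 + lam - 1))

variable {lam ρ : ℝ}

theorem verticalLineSpeed_neg (hρ : 0 < ρ) (h : ρ < √(2 * (lam - 1))) :
    verticalLineSpeed lam ρ < 0 := by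
  have hsq : ρ ^ 2 < 2 * (lam - 1) := (lt_sqrt hρ.le).mp h
  exact div_neg_of_neg_of_pos (mul_neg_of_pos_of_neg hρ (by linarith)) (by nlinarith)

theorem verticalLineSpeed_pos (hlam : 1 ≤ lam) (h : √(2 * (lam - 1)) < ρ) :
    0 < verticalLineSpeed lam ρ := by
  have hρ : 0 < ρ := (sqrt_nonneg _).trans_lt h
  have hsq : 2 * (lam - 1) < ρ ^ 2 := (sqrt_lt' hρ).mp h
  exact div_pos (mul_pos hρ (by linarith)) (by nlinarith)

theorem neg_le_verticalLineSpeed (hlam : 1 ≤ lam) (hρ : 0 ≤ ρ) :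
    -ρ ≤ verticalLineSpeed lam ρ := by
  rcases hρ.eq_or_lt with rfl | hρ
  · simp [verticalLineSpeed]
  rw [verticalLineSpeed, le_div_iff₀ (by nlinarith)]
  nlinarith [pow_pos hρ 3]

theorem verticalLineSpeed_le_half (hlam : 1 ≤ lam) (hρ : 0 ≤ ρ) :
    verticalLineSpeed lam ρ ≤ ρ / 2 := by
  rcases hρ.eq_or_lt with rfl | hρ
  · simp [verticalLineSpeed]
  rw [verticalLineSpeed, div_le_iff₀ (by nlinarith)]
  nlinarith [mul_nonneg hρ.le (sub_nonneg.mpr hlam)]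

end VerticalLineSpeed

/-- Evolution of vertical lines `r = r₀` under the flow with normal velocity
`V_g = k_g/K_g`: lines with `r₀ < r_λ` move left but satisfy `r(t) ≥ r₀ e^{-ct}`
(so they never reach the `x`-axis in finite time), and lines with `r₀ > r_λ`
move right but satisfy `r(t) ≤ r₀ e^{t/2}` (so they never reach infinity in
finite time), where `r_λ = √(2(λ-1))`. -/
theorem vertical_lines_evolution (lam : ℝ) (hlam : 1 < lam) (r₀ : ℝ) (hr₀ : 0 < r₀)
    (r : ℝ → ℝ) (hpos : ∀ t ∈ Set.Ici (0:ℝ), 0 < r t)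
    (hode : ∀ t ∈ Set.Ici (0:ℝ),
      HasDerivAt r (r t * (r t ^ 2 - 2 * (lam - 1)) / (2 * (r t ^ 2 + lam - 1))) t)
    (hinit : r 0 = r₀) :
    (r₀ < Real.sqrt (2 * (lam - 1)) →
      AntitoneOn r (Set.Ici 0) ∧
      ∃ c : ℝ, 0 < c ∧ ∀ t ∈ Set.Ici (0:ℝ), r₀ * exp (-(c * t)) ≤ r t) ∧
    (Real.sqrt (2 * (lam - 1)) < r₀ →
      MonotoneOn r (Set.Ici 0) ∧
      ∀ t ∈ Set.Ici (0:ℝ), r t ≤ r₀ * exp (t / 2)) := by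
  have hflow : ∀ t ∈ Ici (0:ℝ), HasDerivAt r (verticalLineSpeed lam (r t)) t := hode
  refine ⟨fun hlt => ?_, fun hgt => ?_⟩
  · have hle : ∀ t ∈ Ici (0:ℝ), r t ≤ r₀ := le_of_hasDerivAt_neg_of_eq hflow
      (fun _ _ h => h ▸ verticalLineSpeed_neg hr₀ hlt) hinit.le
    refine ⟨antitoneOn_Ici_of_hasDerivAt_nonpos hflow fun t ht =>
      (verticalLineSpeed_neg (hpos t ht) ((hle t ht).trans_lt hlt)).le, 1, one_pos, ?_⟩
    have hlow := mul_exp_le_of_hasDerivAt_mul_le (K := -1) hflow fun t ht => by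
      simpa using neg_le_verticalLineSpeed hlam.le (hpos t ht).le
    simpa [hinit] using hlow
  · have hge : ∀ t ∈ Ici (0:ℝ), r₀ ≤ r t := ge_of_hasDerivAt_pos_of_eq hflow
      (fun _ _ h => h ▸ verticalLineSpeed_pos hlam.le hgt) hinit.ge
    have hnonneg : ∀ t ∈ Ici (0:ℝ), 0 ≤ r t := fun t ht => hr₀.le.trans (hge t ht)
    refine ⟨monotoneOn_Ici_of_hasDerivAt_nonneg hflow fun t ht =>
      (verticalLineSpeed_pos hlam.le (hgt.trans_le (hge t ht))).le, ?_⟩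
    have hup := le_mul_exp_of_hasDerivAt_le_mul (K := 1 / 2) hflow fun t ht => by
      linarith [verticalLineSpeed_le_half hlam.le (hnonneg t ht)]
    intro t ht
    simpa [hinit, div_eq_inv_mul] using hup t ht
end
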